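/- (O(1/t²) rate of accelerated linearized ALM.) Let γ > 0 and η ≥ 2 L_f. Let (xᵏ)_{k≥1}, (x̄ᵏ)_{k≥1} ⊂ E and (λᵏ)_{k≥1} ⊂ H satisfy x̄¹ = x¹, λ¹ = 0 and, for each k ≥ 1 with α_k = 2/(k+1), γ_k = kγ, β_k ≥ γ_k/2: x̂ᵏ = (1−α_k)x̄ᵏ + α_k xᵏ; there is a subgradient uᵏ of g at x^{k+1} with ∇f(x̂ᵏ) + uᵏ − A*λᵏ + β_k A*(A x^{k+1} − b) + (η/k)(x^{k+1} − xᵏ) = 0; x̄^{k+1} = (1−α_k)x̄ᵏ + α_k x^{k+1}; λ^{k+1} = λᵏ − γ_k(A x^{k+1} − b). Let (x*, λ*) satisfy the KKT conditions with λ* ≠ 0. Then for every t ≥ 1: |F(x̄^{t+1}) − F(x*)| ≤ (1/(t(t+1)))·(η‖x¹ − x*‖² + 4‖λ*‖²/γ) and ‖A x̄^{t+1} − b‖ ≤ (1/(t(t+1)‖λ*‖))·(η‖x¹ − x*‖² + 4‖λ*‖²/γ). -/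

import Mathlib

/-!
Fix a multiplier `lm` and let `L(y) = F y - ⟪lm, A y - b⟫`. The quantity
`Φₖ = k(k-1)(L(x̄ᵏ) - L(x*)) + ‖λᵏ - lm‖²/γ + η‖xᵏ - x*‖²` does not increase along the
iteration: the descent lemma at `x̂ᵏ` and convexity of `f` and `g` bound `L(x̄ᵏ⁺¹)`, the
optimality condition of the subproblem turns the remaining linear term into a dual term and a
three-point identity, the dual update cancels the cross term `⟪λᵏ - lm, Axᵏ⁺¹ - b⟫`, and the
leftover quadratic terms have the right sign because `βₖ ≥ kγ/2` and `η ≥ 2L_f`. Since `λ¹ = 0`,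
`Φ₁ = ‖lm‖²/γ + η‖x¹ - x*‖²`, which bounds `t(t+1)(L(x̄ᵗ⁺¹) - L(x*))` for every `lm`. Taking
`lm = 0` bounds the objective gap from above; taking `lm` of norm `2‖λ*‖` opposite to the residual,
together with the KKT bound `F(x̄) - F(x*) ≥ ⟪λ*, Ax̄ - b⟫`, bounds the residual and the objective
gap from below.
-/

open scoped RealInnerProductSpace

section Smooth

variable {E : Type*} [NormedAddCommGroup E] [InnerProductSpace ℝ E] [CompleteSpace E]
  {f : E → ℝ}

open AffineMap

theorem HasGradientAt.hasDerivAt_comp_lineMap {f' x y : E} {t : ℝ}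
    (h : HasGradientAt f f' (lineMap x y t)) :
    HasDerivAt (fun s : ℝ => f (lineMap x y s)) ⟪f', y - x⟫ t := by
  have := h.hasFDerivAt.comp_hasDerivAt t (hasDerivAt_lineMap (a := x) (b := y))
  rwa [InnerProductSpace.toDual_apply_apply] at this

theorem ConvexOn.add_inner_le_of_hasGradientAt (hf : ConvexOn ℝ Set.univ f) {f' x : E}
    (h : HasGradientAt f f' x) (y : E) : f x + ⟪f', y - x⟫ ≤ f y := by
  have hline : ConvexOn ℝ Set.univ (fun s : ℝ => f (lineMap x y s)) :=
    hf.comp_affineMap (lineMap x y)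
  have := hline.le_slope_of_hasDerivAt (Set.mem_univ 0) (Set.mem_univ 1) one_pos
    (HasGradientAt.hasDerivAt_comp_lineMap (by simpa using h))
  simp only [slope_def_field, lineMap_apply_zero, lineMap_apply_one, sub_zero, div_one] at this
  linarith

theorem le_add_inner_add_of_lipschitz_gradient {f' : E → E} {L : ℝ}
    (hf : ∀ x, HasGradientAt f (f' x) x) (hL : ∀ x x', ‖f' x - f' x'‖ ≤ L * ‖x - x'‖)
    (x y : E) : f y ≤ f x + ⟪f' x, y - x⟫ + L / 2 * ‖y - x‖ ^ 2 := by
  set φ : ℝ → ℝ := fun s => f (lineMap x y s) - s * ⟪f' x, y - x⟫ - L / 2 * s ^ 2 * ‖y - x‖ ^ 2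
  have hφ : ∀ s, HasDerivAt φ (⟪f' (lineMap x y s) - f' x, y - x⟫ - L * s * ‖y - x‖ ^ 2) s := by
    intro s
    have h1 := (hf (lineMap x y s)).hasDerivAt_comp_lineMap
    have h2 := (hasDerivAt_id' s).mul_const ⟪f' x, y - x⟫
    have h3 := (((hasDerivAt_id' s).pow 2).const_mul (L / 2)).mul_const (‖y - x‖ ^ 2)
    refine ((h1.sub h2).sub h3).congr_deriv ?_
    simp only [inner_sub_left]; ring
  have hφ' : ∀ s ∈ interior (Set.Ici (0 : ℝ)),
      ⟪f' (lineMap x y s) - f' x, y - x⟫ - L * s * ‖y - x‖ ^ 2 ≤ 0 := by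
    intro s hs
    rw [interior_Ici, Set.mem_Ioi] at hs
    have hdist : ‖lineMap x y s - x‖ = s * ‖y - x‖ := by
      rw [lineMap_apply_module', add_sub_cancel_right, norm_smul, Real.norm_of_nonneg hs.le]
    have : ⟪f' (lineMap x y s) - f' x, y - x⟫ ≤ L * s * ‖y - x‖ ^ 2 :=
      calc ⟪f' (lineMap x y s) - f' x, y - x⟫ ≤ ‖f' (lineMap x y s) - f' x‖ * ‖y - x‖ :=
            real_inner_le_norm _ _
        _ ≤ L * (s * ‖y - x‖) * ‖y - x‖ := by
            rw [← hdist]; gcongr; exact hL _ _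
        _ = L * s * ‖y - x‖ ^ 2 := by ring
    linarith
  have hanti := antitoneOn_of_hasDerivWithinAt_nonpos (convex_Ici 0)
    (fun s _ => (hφ s).continuousAt.continuousWithinAt) (fun s _ => (hφ s).hasDerivWithinAt) hφ'
  have := hanti Set.self_mem_Ici (show (1 : ℝ) ∈ Set.Ici 0 by norm_num) zero_le_one
  simp only [φ, lineMap_apply_zero, lineMap_apply_one] at this
  linarith

theorem ConvexOn.add_le_of_accelerated_step {g : E → ℝ} {f' : E → E} {L α : ℝ}
    (hf : ConvexOn ℝ Set.univ f) (hf' : ∀ x, HasGradientAt f (f' x) x)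
    (hL : ∀ x x', ‖f' x - f' x'‖ ≤ L * ‖x - x'‖) (hg : ConvexOn ℝ Set.univ g)
    (hα₀ : 0 ≤ α) (hα₁ : α ≤ 1) {xb x x' u : E} (hu : ∀ y, g y ≥ g x' + ⟪u, y - x'⟫) (z : E) :
    f ((1 - α) • xb + α • x') + g ((1 - α) • xb + α • x')
      ≤ (1 - α) * (f xb + g xb) + α * (f z + g z)
        + α * ⟪f' ((1 - α) • xb + α • x) + u, x' - z⟫ + L / 2 * α ^ 2 * ‖x' - x‖ ^ 2 := by
  set xh := (1 - α) • xb + α • x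
  have hdesc := le_add_inner_add_of_lipschitz_gradient hf' hL xh ((1 - α) • xb + α • x')
  have hstep : (1 - α) • xb + α • x' - xh = α • (x' - x) := by simp only [xh]; module
  have hsplit : (1 - α) • xb + α • x' - xh
      = (1 - α) • (xb - xh) + α • (z - xh) + α • (x' - z) := by simp only [xh]; module
  have hnorm : ‖(1 - α) • xb + α • x' - xh‖ ^ 2 = α ^ 2 * ‖x' - x‖ ^ 2 := by
    rw [hstep, norm_smul, Real.norm_of_nonneg hα₀, mul_pow]
  rw [hnorm, hsplit, inner_add_right, inner_add_right, real_inner_smul_right,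
    real_inner_smul_right, real_inner_smul_right] at hdesc
  have hxb := hf.add_inner_le_of_hasGradientAt (hf' xh) xb
  have hz := hf.add_inner_le_of_hasGradientAt (hf' xh) z
  have hgx : g ((1 - α) • xb + α • x') ≤ (1 - α) * g xb + α * g x' :=
    hg.2 trivial trivial (by linarith) hα₀ (by ring)
  have hgu : g x' ≤ g z + ⟪u, x' - z⟫ := by
    have := hu z
    rw [← neg_sub, inner_neg_right] at this
    linarith
  rw [inner_add_left]
  linarith [mul_le_mul_of_nonneg_left hxb (sub_nonneg.2 hα₁), mul_le_mul_of_nonneg_left hz hα₀,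
    mul_le_mul_of_nonneg_left hgu hα₀]

end Smooth

open scoped InnerProduct

section ALM

variable {E H : Type*} [NormedAddCommGroup E] [InnerProductSpace ℝ E]
  [NormedAddCommGroup H] [InnerProductSpace ℝ H]
  (A : E →L[ℝ] H) (b : H) (F : E → ℝ) (γ η : ℝ) (xs : E) (lm : H)

noncomputable def lagrangianGap (y : E) : ℝ :=
  F y - F xs - ⟪lm, A y - b⟫

noncomputable def almLyapunov (c : ℝ) (xb x : E) (lam : H) : ℝ :=
  c * lagrangianGap A b F xs lm xb + ‖lam - lm‖ ^ 2 / γ + η * ‖x - xs‖ ^ 2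

variable [CompleteSpace E] [CompleteSpace H] {A b γ η xs}

theorem lagrangianGap_le_of_linearized_step {f g : E → ℝ} {f' : E → E} {L α β ρ : ℝ}
    (hf : ConvexOn ℝ Set.univ f) (hf' : ∀ x, HasGradientAt f (f' x) x)
    (hL : ∀ x x', ‖f' x - f' x'‖ ≤ L * ‖x - x'‖) (hg : ConvexOn ℝ Set.univ g)
    (hα₀ : 0 ≤ α) (hα₁ : α ≤ 1) (hxs : A xs = b)
    {xb x x' u : E} {lam : H} (hu : ∀ y, g y ≥ g x' + ⟪u, y - x'⟫)
    (hopt : f' ((1 - α) • xb + α • x) + u - (A†) lam + β • (A†) (A x' - b) + ρ • (x' - x) = 0) :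
    lagrangianGap A b (f + g) xs lm ((1 - α) • xb + α • x')
      ≤ (1 - α) * lagrangianGap A b (f + g) xs lm xb
        + α * (⟪lam - lm, A x' - b⟫ - β * ‖A x' - b‖ ^ 2
          - ρ / 2 * (‖x' - x‖ ^ 2 + ‖x' - xs‖ ^ 2 - ‖x - xs‖ ^ 2))
        + L / 2 * α ^ 2 * ‖x' - x‖ ^ 2 := by
  have hacc := hf.add_le_of_accelerated_step (xb := xb) (x := x) hf' hL hg hα₀ hα₁ hu xs
  set r := A x' - b
  have hopt' : ⟪f' ((1 - α) • xb + α • x) + u, x' - xs⟫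
      = ⟪lam, r⟫ - β * ‖r‖ ^ 2 - ρ * ⟪x' - x, x' - xs⟫ := by
    have hAw : A (x' - xs) = r := by rw [map_sub, hxs]
    have h0 := congrArg (fun v => ⟪v, x' - xs⟫) hopt
    simp only [inner_add_left, inner_sub_left, real_inner_smul_left,
      ContinuousLinearMap.adjoint_inner_left, hAw, real_inner_self_eq_norm_sq,
      inner_zero_left] at h0 ⊢
    linarith
  have hpolar : 2 * ⟪x' - x, x' - xs⟫ = ‖x' - x‖ ^ 2 + ‖x' - xs‖ ^ 2 - ‖x - xs‖ ^ 2 := by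
    have := norm_sub_sq_real (x' - xs) (x' - x)
    rw [show x' - xs - (x' - x) = x - xs by abel, real_inner_comm] at this
    linarith
  have hprox : ρ * ⟪x' - x, x' - xs⟫ = ρ / 2 * (‖x' - x‖ ^ 2 + ‖x' - xs‖ ^ 2 - ‖x - xs‖ ^ 2) := by
    rw [← hpolar]; ring
  have hres : ⟪lm, A ((1 - α) • xb + α • x') - b⟫
      = (1 - α) * ⟪lm, A xb - b⟫ + α * ⟪lm, r⟫ := by
    rw [← real_inner_smul_right, ← real_inner_smul_right, ← inner_add_right]
    congr 1
    simp only [map_add, map_smul]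
    module
  rw [hopt', hprox] at hacc
  simp only [lagrangianGap, Pi.add_apply, hres, inner_sub_left lam lm]
  linarith

theorem almLyapunov_step_le {f g : E → ℝ} {f' : E → E} {L K β : ℝ}
    (hf : ConvexOn ℝ Set.univ f) (hf' : ∀ x, HasGradientAt f (f' x) x)
    (hL₀ : 0 ≤ L) (hL : ∀ x x', ‖f' x - f' x'‖ ≤ L * ‖x - x'‖) (hg : ConvexOn ℝ Set.univ g)
    (hγ : 0 < γ) (hη : 2 * L ≤ η) (hK : 1 ≤ K) (hβ : K * γ / 2 ≤ β) (hxs : A xs = b)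
    {xb x x' xb' u : E} {lam lam' : H} (hu : ∀ y, g y ≥ g x' + ⟪u, y - x'⟫)
    (hopt : f' ((1 - 2 / (K + 1)) • xb + (2 / (K + 1)) • x) + u - (A†) lam
      + β • (A†) (A x' - b) + (η / K) • (x' - x) = 0)
    (hxb' : xb' = (1 - 2 / (K + 1)) • xb + (2 / (K + 1)) • x')
    (hlam' : lam' = lam - (K * γ) • (A x' - b)) :
    almLyapunov A b (f + g) γ η xs lm ((K + 1) * K) xb' x' lam'
      ≤ almLyapunov A b (f + g) γ η xs lm (K * (K - 1)) xb x lam := by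
  set α := 2 / (K + 1) with hα
  have hK₀ : 0 < K := by linarith
  have hα₁ : α ≤ 1 := by rw [hα, div_le_one (by linarith)]; linarith
  have hgap := lagrangianGap_le_of_linearized_step lm hf hf' hL hg (by positivity) hα₁ hxs hu hopt
  rw [← hxb'] at hgap
  have hdual : ‖lam' - lm‖ ^ 2 / γ = ‖lam - lm‖ ^ 2 / γ - 2 * K * ⟪lam - lm, A x' - b⟫
      + K ^ 2 * γ * ‖A x' - b‖ ^ 2 := by
    rw [hlam', sub_right_comm,
      norm_sub_sq_real, real_inner_smul_right, norm_smul, mul_pow, Real.norm_eq_abs, sq_abs]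
    field_simp
  have hcoef₁ : (K + 1) * K * (1 - α) = K * (K - 1) := by rw [hα]; field_simp; ring
  have hcoef₂ : (K + 1) * K * α = 2 * K := by rw [hα]; field_simp
  have hscaled := mul_le_mul_of_nonneg_left hgap (by positivity : 0 ≤ (K + 1) * K)
  rw [mul_add, mul_add, ← mul_assoc, ← mul_assoc, hcoef₁, hcoef₂] at hscaled
  have hpenalty : K ^ 2 * γ * ‖A x' - b‖ ^ 2 ≤ 2 * K * β * ‖A x' - b‖ ^ 2 := by
    refine mul_le_mul_of_nonneg_right ?_ (sq_nonneg _)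
    linarith [mul_le_mul_of_nonneg_left hβ (by positivity : 0 ≤ 2 * K)]
  have hsmooth : (K + 1) * K * (L / 2 * α ^ 2) ≤ η := by
    have : (K + 1) * K * (L / 2 * α ^ 2) = 2 * L * (K / (K + 1)) := by rw [hα]; field_simp
    rw [this]
    nlinarith [div_le_one_of_le₀ (show K ≤ K + 1 by linarith) (by linarith : (0 : ℝ) ≤ K + 1)]
  have hprox := mul_le_mul_of_nonneg_right hsmooth (sq_nonneg ‖x' - x‖)
  have hηK : 2 * K * (η / K / 2) = η := by field_simp
  rw [mul_sub (2 * K) _ (η / K / 2 * _), ← mul_assoc (2 * K) (η / K / 2), hηK] at hscaled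
  unfold almLyapunov
  linarith only [hscaled, hdual, hpenalty, hprox]

theorem almLyapunov_antitoneOn {f g : E → ℝ} {f' : E → E} {L : ℝ}
    (hf : ConvexOn ℝ Set.univ f) (hf' : ∀ x, HasGradientAt f (f' x) x)
    (hL₀ : 0 ≤ L) (hL : ∀ x x', ‖f' x - f' x'‖ ≤ L * ‖x - x'‖) (hg : ConvexOn ℝ Set.univ g)
    (hγ : 0 < γ) (hη : 2 * L ≤ η) {β : ℕ → ℝ} (hβ : ∀ k : ℕ, 1 ≤ k → (k : ℝ) * γ / 2 ≤ β k)
    {x xb : ℕ → E} {lam : ℕ → H}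
    (hopt : ∀ k : ℕ, 1 ≤ k → ∃ u : E, (∀ y, g y ≥ g (x (k + 1)) + ⟪u, y - x (k + 1)⟫) ∧
      f' ((1 - 2 / ((k : ℝ) + 1)) • xb k + (2 / ((k : ℝ) + 1)) • x k) + u - (A†) (lam k)
        + β k • (A†) (A (x (k + 1)) - b) + (η / (k : ℝ)) • (x (k + 1) - x k) = 0)
    (hxb : ∀ k : ℕ, 1 ≤ k →
      xb (k + 1) = (1 - 2 / ((k : ℝ) + 1)) • xb k + (2 / ((k : ℝ) + 1)) • x (k + 1))
    (hlam : ∀ k : ℕ, 1 ≤ k → lam (k + 1) = lam k - ((k : ℝ) * γ) • (A (x (k + 1)) - b))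
    (hxs : A xs = b) :
    AntitoneOn (fun k : ℕ => almLyapunov A b (f + g) γ η xs lm ((k : ℝ) * (k - 1))
      (xb k) (x k) (lam k)) {k | 1 ≤ k} := by
  refine antitoneOn_nat_Ici_of_succ_le fun k hk => ?_
  obtain ⟨u, hu, hoptk⟩ := hopt k hk
  have := almLyapunov_step_le lm hf hf' hL₀ hL hg hγ hη (by exact_mod_cast hk) (hβ k hk) hxs hu
    hoptk (hxb k hk) (hlam k hk)
  push_cast
  ring_nf at this ⊢
  exact this

theorem inner_le_sub_of_kkt {f g : E → ℝ} {f' : E} {ls : H} (hf : ConvexOn ℝ Set.univ f)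
    (hf' : HasGradientAt f f' xs) (hxs : A xs = b)
    (hkkt : ∀ y, g y ≥ g xs + ⟪(A†) ls - f', y - xs⟫) (y : E) :
    ⟪ls, A y - b⟫ ≤ (f y + g y) - (f xs + g xs) := by
  have hfy := hf.add_inner_le_of_hasGradientAt hf' y
  have hgy := hkkt y
  rw [inner_sub_left, ContinuousLinearMap.adjoint_inner_left, map_sub, hxs] at hgy
  linarith

end ALM

theorem abs_le_and_norm_le_of_forall_lagrangian_le {H : Type*} [NormedAddCommGroup H]
    [InnerProductSpace ℝ H] {T γ C Δ : ℝ} {r ls : H} (hT : 0 < T) (hγ : 0 < γ) (hls : ls ≠ 0)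
    (hgap : ∀ lm : H, T * (Δ - ⟪lm, r⟫) ≤ C + ‖lm‖ ^ 2 / γ) (hlow : ⟪ls, r⟫ ≤ Δ) :
    |Δ| ≤ 1 / T * (C + 4 * ‖ls‖ ^ 2 / γ) ∧ ‖r‖ ≤ 1 / (T * ‖ls‖) * (C + 4 * ‖ls‖ ^ 2 / γ) := by
  have hls₀ : 0 < ‖ls‖ := norm_pos_iff.2 hls
  have hcs : -(‖ls‖ * ‖r‖) ≤ Δ := le_trans (neg_le_of_abs_le (abs_real_inner_le_norm ls r)) hlow
  have hcs' := mul_le_mul_of_nonneg_left (neg_le_iff_add_nonneg.1 hcs) hT.le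
  have hobj : T * Δ ≤ C := by simpa using hgap 0
  have hpen : 0 ≤ 4 * ‖ls‖ ^ 2 / γ := by positivity
  have hfeas : T * (‖ls‖ * ‖r‖) ≤ C + 4 * ‖ls‖ ^ 2 / γ := by
    rcases eq_or_ne r 0 with rfl | hr
    · rw [norm_zero, mul_zero, mul_zero] at hcs' ⊢
      linarith
    · have hr₀ : 0 < ‖r‖ := norm_pos_iff.2 hr
      -- a multiplier of norm `2‖ls‖` against `r`: `hcs` absorbs half of what it gains
      have hinner : ⟪-(2 * ‖ls‖ / ‖r‖) • r, r⟫ = -(2 * (‖ls‖ * ‖r‖)) := by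
        rw [real_inner_smul_left, real_inner_self_eq_norm_sq]; field_simp
      have hnorm : ‖-(2 * ‖ls‖ / ‖r‖) • r‖ ^ 2 = 4 * ‖ls‖ ^ 2 := by
        rw [norm_smul, norm_neg, Real.norm_of_nonneg (by positivity)]; field_simp; ring
      have := hgap (-(2 * ‖ls‖ / ‖r‖) • r)
      rw [hinner, hnorm] at this
      linarith
  rw [one_div_mul_eq_div, one_div_mul_eq_div, abs_le, neg_le, le_div_iff₀ hT, le_div_iff₀ hT,
    le_div_iff₀ (by positivity)]
  refine ⟨⟨?_, by linarith⟩, by linarith⟩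
  linarith

theorem stmt_9_general {E H : Type*}
    [NormedAddCommGroup E] [InnerProductSpace ℝ E] [FiniteDimensional ℝ E]
    [NormedAddCommGroup H] [InnerProductSpace ℝ H] [FiniteDimensional ℝ H]
    (A : E →L[ℝ] H) (b : H)
    (f : E → ℝ) (f' : E → E) (Lf : ℝ) (hLf : 0 ≤ Lf)
    (hfconv : ConvexOn ℝ Set.univ f)
    (hgrad : ∀ x : E, HasGradientAt f (f' x) x)
    (hlip : ∀ x x' : E, ‖f' x - f' x'‖ ≤ Lf * ‖x - x'‖)
    (g : E → ℝ) (hgconv : ConvexOn ℝ Set.univ g)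
    (γ η : ℝ) (hγ : 0 < γ) (hη : 2 * Lf ≤ η)
    (βk : ℕ → ℝ) (hβk : ∀ k : ℕ, 1 ≤ k → (k : ℝ) * γ / 2 ≤ βk k)
    (x xb : ℕ → E) (lam : ℕ → H)
    (hlam1 : lam 1 = 0)
    (hopt : ∀ k : ℕ, 1 ≤ k → ∃ u : E,
      (∀ x' : E, g x' ≥ g (x (k+1)) + ⟪u, x' - x (k+1)⟫) ∧
      f' ((1 - 2 / ((k : ℝ) + 1)) • xb k + (2 / ((k : ℝ) + 1)) • x k) + u
        - (ContinuousLinearMap.adjoint A) (lam k)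
        + βk k • (ContinuousLinearMap.adjoint A) (A (x (k+1)) - b)
        + (η / (k : ℝ)) • (x (k+1) - x k) = 0)
    (hxb : ∀ k : ℕ, 1 ≤ k →
      xb (k+1) = (1 - 2 / ((k : ℝ) + 1)) • xb k + (2 / ((k : ℝ) + 1)) • x (k+1))
    (hlam : ∀ k : ℕ, 1 ≤ k → lam (k+1) = lam k - ((k : ℝ) * γ) • (A (x (k+1)) - b))
    (xs : E) (ls : H)
    (hfeas : A xs = b) (hls : ls ≠ 0)
    (hkkt : ∀ x' : E, g x' ≥ g xs + ⟪(ContinuousLinearMap.adjoint A) ls - f' xs, x' - xs⟫) :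
    ∀ t : ℕ, 1 ≤ t →
      |(f (xb (t+1)) + g (xb (t+1))) - (f xs + g xs)|
          ≤ (1 / ((t : ℝ) * ((t : ℝ) + 1))) * (η * ‖x 1 - xs‖ ^ 2 + 4 * ‖ls‖ ^ 2 / γ) ∧
      ‖A (xb (t+1)) - b‖
          ≤ (1 / ((t : ℝ) * ((t : ℝ) + 1) * ‖ls‖)) * (η * ‖x 1 - xs‖ ^ 2 + 4 * ‖ls‖ ^ 2 / γ) := by
  intro t ht
  have hT : (0 : ℝ) < t * (t + 1) := by
    have : (1 : ℝ) ≤ t := by exact_mod_cast ht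
    positivity
  refine abs_le_and_norm_le_of_forall_lagrangian_le hT hγ hls (fun lm => ?_)
    (inner_le_sub_of_kkt hfconv (hgrad xs) hfeas hkkt _)
  have hV := almLyapunov_antitoneOn lm hfconv hgrad hLf hlip hgconv hγ hη hβk hopt hxb hlam hfeas
    (le_refl 1) (by omega : 1 ≤ t + 1) (by omega : 1 ≤ t + 1)
  simp only [almLyapunov, lagrangianGap, Pi.add_apply, hlam1, zero_sub, norm_neg] at hV
  push_cast at hV
  have : 0 ≤ ‖lam (t + 1) - lm‖ ^ 2 / γ + η * ‖x (t + 1) - xs‖ ^ 2 := by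
    have : 0 ≤ η := by linarith
    positivity
  linarith

/-- O(1/t²) rate of the accelerated linearized ALM (Theorem 2.7 in the paper). -/
theorem stmt_9 {E H : Type*}
    [NormedAddCommGroup E] [InnerProductSpace ℝ E] [FiniteDimensional ℝ E]
    [NormedAddCommGroup H] [InnerProductSpace ℝ H] [FiniteDimensional ℝ H]
    (A : E →L[ℝ] H) (b : H)
    (f : E → ℝ) (f' : E → E) (Lf : ℝ) (hLf : 0 ≤ Lf)
    (hfconv : ConvexOn ℝ Set.univ f)
    (hgrad : ∀ x : E, HasGradientAt f (f' x) x)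
    (hlip : ∀ x x' : E, ‖f' x - f' x'‖ ≤ Lf * ‖x - x'‖)
    (g : E → ℝ) (hgconv : ConvexOn ℝ Set.univ g)
    (γ η : ℝ) (hγ : 0 < γ) (hη : 2 * Lf ≤ η)
    (βk : ℕ → ℝ) (hβk : ∀ k : ℕ, 1 ≤ k → (k : ℝ) * γ / 2 ≤ βk k)
    (x xb : ℕ → E) (lam : ℕ → H)
    (hinit : xb 1 = x 1) (hlam1 : lam 1 = 0)
    (hopt : ∀ k : ℕ, 1 ≤ k → ∃ u : E,
      (∀ x' : E, g x' ≥ g (x (k+1)) + ⟪u, x' - x (k+1)⟫) ∧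
      f' ((1 - 2 / ((k : ℝ) + 1)) • xb k + (2 / ((k : ℝ) + 1)) • x k) + u
        - (ContinuousLinearMap.adjoint A) (lam k)
        + βk k • (ContinuousLinearMap.adjoint A) (A (x (k+1)) - b)
        + (η / (k : ℝ)) • (x (k+1) - x k) = 0)
    (hxb : ∀ k : ℕ, 1 ≤ k →
      xb (k+1) = (1 - 2 / ((k : ℝ) + 1)) • xb k + (2 / ((k : ℝ) + 1)) • x (k+1))
    (hlam : ∀ k : ℕ, 1 ≤ k → lam (k+1) = lam k - ((k : ℝ) * γ) • (A (x (k+1)) - b))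
    (xs : E) (ls : H)
    (hfeas : A xs = b) (hls : ls ≠ 0)
    (hkkt : ∀ x' : E, g x' ≥ g xs + ⟪(ContinuousLinearMap.adjoint A) ls - f' xs, x' - xs⟫) :
    ∀ t : ℕ, 1 ≤ t →
      |(f (xb (t+1)) + g (xb (t+1))) - (f xs + g xs)|
          ≤ (1 / ((t : ℝ) * ((t : ℝ) + 1))) * (η * ‖x 1 - xs‖ ^ 2 + 4 * ‖ls‖ ^ 2 / γ) ∧
      ‖A (xb (t+1)) - b‖
          ≤ (1 / ((t : ℝ) * ((t : ℝ) + 1) * ‖ls‖)) * (η * ‖x 1 - xs‖ ^ 2 + 4 * ‖ls‖ ^ 2 / γ) :=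
  stmt_9_general A b f f' Lf hLf hfconv hgrad hlip g hgconv γ η hγ hη βk hβk x xb lam hlam1 hopt hxb
    hlam xs ls hfeas hls hkkt
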